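/- Let β ∈ (0,1), t > 0 and λ > 0, and let X be a nonnegative random variable whose moments satisfy E[X^q] = Γ(q+1) t^{qβ}/Γ(qβ+1) for every q > 0 (the moments of an inverse β-stable subordinator at time t). Then: (i) for r ∈ (0, 1/(1−β)), E[exp(λ X^r)] < ∞; (ii) for r > 1/(1−β), E[exp(λ X^r)] = ∞; (iii) for r = 1/(1−β), E[exp(λ X^r)] < ∞ if λ t^{r−1} < (r−1)^{r−1}/r^r, and E[exp(λ X^r)] = ∞ if λ t^{r−1} > (r−1)^{r−1}/r^r. -/

import Mathlib

/-!
Expanding the exponential and integrating term by term (monotone convergence),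
`E[exp (λ X^r)] = ∑ aₙ` with `aₙ = λⁿ / n! · Γ(rn+1) t^(rnβ) / Γ(rnβ+1)`.
The crude Stirling estimate `log Γ(x+1) = x log x - x + O(log x)` gives
`log aₙ = n (c + (r(1-β) - 1) log n) + o(n)` with an explicit constant `c`.
So for `r(1-β) < 1` the terms decay faster than any geometric sequence, for `r(1-β) > 1` they
blow up, and for `r(1-β) = 1` everything depends on the sign of
`c = log (λ t^(r-1) r^r / (r-1)^(r-1))`.
-/

open MeasureTheory Filter Topology Real Asymptotics
open scoped Nat

theorem Real.mul_log_sub_add_sub_mul_log_le {a b : ℝ} (ha : 0 < a) (hb : 0 < b) :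
    a * log a - a + (b - a) * log a ≤ b * log b - b := by
  have h := mul_le_mul_of_nonneg_left (log_le_sub_one_of_pos (div_pos ha hb)) hb.le
  rw [log_div ha.ne' hb.ne', mul_sub, mul_sub, mul_div_cancel₀ _ hb.ne'] at h
  linarith

theorem Stirling.log_factorial_le {n : ℕ} (hn : n ≠ 0) :
    log n ! ≤ n * log n - n + log n / 2 + 1 := by
  obtain ⟨k, rfl⟩ := Nat.exists_eq_succ_of_ne_zero hn
  have h := log_le_log (stirlingSeq'_pos k) (stirlingSeq'_antitone (Nat.zero_le k))
  simp only [Function.comp_apply, Nat.succ_eq_add_one, zero_add, stirlingSeq_one] at h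
  rw [log_stirlingSeq_formula, log_div (exp_pos 1).ne' (by positivity), log_exp,
    log_sqrt (by norm_num), log_mul (by norm_num) (by positivity),
    log_div (by positivity) (exp_pos 1).ne', log_exp] at h
  linarith

/-- `Γ(x+1)` lies between `⌊x⌋!` and `(⌊x⌋+1)!`; the tangent-line inequality for
`y log y - y` moves the factorial Stirling bounds from `⌊x⌋` and `⌊x⌋ + 1` to `x`
at a cost of `log (x+1)`. -/
theorem Real.abs_log_Gamma_add_one_sub_le {x : ℝ} (hx : 1 ≤ x) :
    |log (Gamma (x + 1)) - (x * log x - x)| ≤ 1 + 2 * log (x + 1) := by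
  set m := ⌊x⌋₊
  have hm : 1 ≤ m := Nat.le_floor (by exact_mod_cast hx)
  have hm' : (1 : ℝ) ≤ m := by exact_mod_cast hm
  have hmx : (m : ℝ) ≤ x := Nat.floor_le (by linarith)
  have hxm : x < m + 1 := Nat.lt_floor_add_one x
  have hlow : log m ! ≤ log (Gamma (x + 1)) := by
    rw [← Gamma_nat_eq_factorial]
    exact log_le_log (Gamma_pos_of_pos (by positivity)) (Gamma_strictMonoOn_Ici.monotoneOn
      (Set.mem_Ici.2 (by linarith)) (Set.mem_Ici.2 (by linarith)) (by linarith))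
  have hupp : log (Gamma (x + 1)) ≤ log (m + 1)! := by
    rw [← Gamma_nat_eq_factorial, Nat.cast_add_one]
    exact log_le_log (Gamma_pos_of_pos (by linarith)) (Gamma_strictMonoOn_Ici.monotoneOn
      (Set.mem_Ici.2 (by linarith)) (Set.mem_Ici.2 (by linarith)) (by linarith))
  have hfac_low := Stirling.le_log_factorial_stirling (Nat.one_le_iff_ne_zero.1 hm)
  have hfac_upp := Stirling.log_factorial_le (n := m + 1) (by omega)
  push_cast at hfac_upp
  have htan_low :=
    mul_log_sub_add_sub_mul_log_le (by linarith : 0 < x) (by linarith : (0 : ℝ) < m)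
  have htan_upp :=
    mul_log_sub_add_sub_mul_log_le (by linarith : (0 : ℝ) < m + 1) (by linarith : 0 < x)
  have hlogx : log x ≤ log (x + 1) := log_le_log (by linarith) (by linarith)
  have hlogm : log (m + 1) ≤ log (x + 1) := log_le_log (by linarith) (by linarith)
  have hlogx_mul : (x - m) * log x ≤ log x := by nlinarith [log_nonneg hx]
  have hlogm_mul : (m + 1 - x) * log (m + 1) ≤ log (m + 1) := by
    nlinarith [log_nonneg (by linarith : (1 : ℝ) ≤ m + 1)]
  have h2pi : 0 ≤ log (2 * π) := log_nonneg (by linarith [pi_gt_three])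
  rw [abs_le]
  constructor <;> linarith [log_nonneg hm', log_nonneg (by linarith : 1 ≤ x + 1)]

theorem Real.isLittleO_log_Gamma_add_one_sub :
    (fun x => log (Gamma (x + 1)) - (x * log x - x)) =o[atTop] id := by
  have hlog : (fun x => log (x + 1)) =o[atTop] id :=
    (isLittleO_log_id_atTop.comp_tendsto (tendsto_atTop_add_const_right _ 1 tendsto_id))
      |>.trans_isBigO ((isBigO_refl _ _).add (isLittleO_const_id_atTop 1).isBigO)
  refine IsBigO.trans_isLittleO (IsBigO.of_bound 1 ?_)
    ((isLittleO_const_id_atTop 1).add (hlog.const_mul_left 2))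
  filter_upwards [eventually_ge_atTop 1] with x hx
  rw [one_mul, norm_eq_abs, norm_of_nonneg (by linarith [log_nonneg (by linarith : 1 ≤ x + 1)])]
  exact abs_log_Gamma_add_one_sub_le hx

theorem ENNReal.ofReal_exp_eq_tsum {x : ℝ} (hx : 0 ≤ x) :
    ENNReal.ofReal (exp x) = ∑' n : ℕ, ENNReal.ofReal (x ^ n / n !) := by
  rw [exp_eq_exp_ℝ, ← (NormedSpace.expSeries_div_hasSum_exp x).tsum_eq,
    ENNReal.ofReal_tsum_of_nonneg (fun n => by positivity)
      (NormedSpace.expSeries_div_summable x)]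

theorem ENNReal.tsum_ofReal_eq_top_of_eventually_one_le {a : ℕ → ℝ}
    (h : ∀ᶠ n in atTop, 1 ≤ a n) : ∑' n, ENNReal.ofReal (a n) = ⊤ := by
  by_contra hne
  obtain ⟨n, hn1, hn2⟩ := (h.and
    ((ENNReal.tendsto_atTop_zero_of_tsum_ne_top hne).eventually_lt_const one_pos)).exists
  exact (ENNReal.one_le_ofReal.2 hn1).not_gt hn2

theorem lintegral_ofReal_exp_mul_rpow_eq_tsum {Ω : Type*} [MeasurableSpace Ω] (μ : Measure Ω)
    {X : Ω → ℝ} (hXm : Measurable X) (hX0 : ∀ ω, 0 ≤ X ω) {lam r : ℝ} (hlam : 0 ≤ lam)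
    (hr : 0 ≤ r) :
    ∫⁻ ω, ENNReal.ofReal (exp (lam * X ω ^ r)) ∂μ
      = ∑' n : ℕ, ENNReal.ofReal (lam ^ n / n !) * ∫⁻ ω, ENNReal.ofReal (X ω ^ (r * n)) ∂μ := by
  have hmeas (n : ℕ) : Measurable fun ω => ENNReal.ofReal (X ω ^ (r * n)) :=
    ((continuous_rpow_const (by positivity)).measurable.comp hXm).ennreal_ofReal
  have hterm (ω : Ω) (n : ℕ) : ENNReal.ofReal ((lam * X ω ^ r) ^ n / n !)
      = ENNReal.ofReal (lam ^ n / n !) * ENNReal.ofReal (X ω ^ (r * n)) := by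
    rw [← ENNReal.ofReal_mul (by positivity), mul_pow, ← rpow_mul_natCast (hX0 ω)]
    ring_nf
  simp_rw [ENNReal.ofReal_exp_eq_tsum (mul_nonneg hlam (rpow_nonneg (hX0 _) r)), hterm]
  rw [lintegral_tsum fun n => ((hmeas n).const_mul _).aemeasurable]
  simp_rw [lintegral_const_mul _ (hmeas _)]

section GrowthRate

variable {a e : ℕ → ℝ}

theorem summable_of_isLittleO_log_sub_mul (ha : ∀ n, 0 < a n)
    (h : (fun n => log (a n) - n * e n) =o[atTop] (fun n => (n : ℝ))) {ρ : ℝ} (hρ : ρ < 0)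
    (he : ∀ᶠ n in atTop, e n ≤ ρ) : Summable a := by
  refine .of_norm_bounded_eventually_nat (summable_geometric_of_lt_one (exp_pos (ρ / 2)).le
    (exp_lt_one_iff.2 (by linarith))) ?_
  filter_upwards [he, h.def (by linarith : 0 < -ρ / 2)] with n hen hn
  rw [norm_of_nonneg (ha n).le, ← exp_nat_mul, ← log_le_iff_le_exp (ha n)]
  simp only [norm_eq_abs, Nat.abs_cast] at hn
  nlinarith [abs_le.1 hn, (Nat.cast_nonneg n : (0 : ℝ) ≤ n)]

theorem eventually_one_le_of_isLittleO_log_sub_mul (ha : ∀ n, 0 < a n)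
    (h : (fun n => log (a n) - n * e n) =o[atTop] (fun n => (n : ℝ))) {c : ℝ} (hc : 0 < c)
    (he : ∀ᶠ n in atTop, c ≤ e n) : ∀ᶠ n in atTop, 1 ≤ a n := by
  filter_upwards [he, h.def hc] with n hen hn
  rw [← log_nonneg_iff (ha n)]
  simp only [norm_eq_abs, Nat.abs_cast] at hn
  nlinarith [abs_le.1 hn, (Nat.cast_nonneg n : (0 : ℝ) ≤ n)]

end GrowthRate

noncomputable def invStableMoment (β t q : ℝ) : ℝ :=
  Gamma (q + 1) * t ^ (q * β) / Gamma (q * β + 1)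

noncomputable def invStableExpTerm (β t lam r : ℝ) (n : ℕ) : ℝ :=
  lam ^ n / n ! * invStableMoment β t (r * n)

noncomputable def invStableExpRate (β t lam r : ℝ) (n : ℕ) : ℝ :=
  log lam + r * β * log t + (r * log r - r) - (r * β * log (r * β) - r * β) + 1
    + (r * (1 - β) - 1) * log n

section InverseStable

variable {β t lam r : ℝ}

theorem invStableMoment_pos (hβ : 0 ≤ β) (ht : 0 < t) {q : ℝ} (hq : 0 ≤ q) :
    0 < invStableMoment β t q := by
  have := Gamma_pos_of_pos (by positivity : 0 < q + 1)
  have := Gamma_pos_of_pos (by positivity : 0 < q * β + 1)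
  have := rpow_pos_of_pos ht (q * β)
  unfold invStableMoment
  positivity

theorem invStableExpTerm_pos (hβ : 0 ≤ β) (ht : 0 < t) (hlam : 0 < lam) (hr : 0 ≤ r)
    (n : ℕ) :
    0 < invStableExpTerm β t lam r n := by
  have := invStableMoment_pos hβ ht (by positivity : 0 ≤ r * n)
  unfold invStableExpTerm
  positivity

theorem log_invStableExpTerm (hβ : 0 ≤ β) (ht : 0 < t) (hlam : 0 < lam) (hr : 0 ≤ r)
    (n : ℕ) :
    log (invStableExpTerm β t lam r n) = n * log lam - log n !
      + log (Gamma (r * n + 1)) + r * β * n * log t - log (Gamma (r * β * n + 1)) := by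
  have hΓ := Gamma_pos_of_pos (by positivity : 0 < r * n + 1)
  have hΓβ := Gamma_pos_of_pos (by positivity : 0 < r * β * n + 1)
  rw [invStableExpTerm, invStableMoment, mul_right_comm r n β,
    log_mul (by positivity) (by positivity), log_div (by positivity) (by positivity),
    log_div (by positivity) hΓβ.ne', log_mul hΓ.ne' (by positivity), log_pow, log_rpow ht]
  ring

theorem isLittleO_log_invStableExpTerm_sub (hβ : 0 < β) (ht : 0 < t) (hlam : 0 < lam)
    (hr : 0 < r) :
    (fun n : ℕ => log (invStableExpTerm β t lam r n) - n * invStableExpRate β t lam r n)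
      =o[atTop] (fun n => (n : ℝ)) := by
  set g : ℝ → ℝ := fun x => log (Gamma (x + 1)) - (x * log x - x)
  have hg (c : ℝ) (hc : 0 < c) : (fun n : ℕ => g (c * n)) =o[atTop] (fun n => (n : ℝ)) :=
    (isLittleO_log_Gamma_add_one_sub.comp_tendsto
      (tendsto_natCast_atTop_atTop.const_mul_atTop hc)).trans_isBigO
      (isBigO_const_mul_self c _ _)
  refine (((hg r hr).sub (hg 1 one_pos)).sub (hg (r * β) (by positivity))).congr' ?_ .rfl
  filter_upwards [eventually_ge_atTop 1] with n hn
  have hn0 : (0 : ℝ) < n := by exact_mod_cast hn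
  simp only [g, invStableExpRate]
  rw [log_invStableExpTerm hβ.le ht hlam hr.le, one_mul, Gamma_nat_eq_factorial,
    log_mul hr.ne' hn0.ne', log_mul (by positivity) hn0.ne']
  ring

theorem tendsto_invStableExpRate_atBot (hr : r * (1 - β) < 1) :
    Tendsto (invStableExpRate β t lam r) atTop atBot :=
  tendsto_atBot_add_const_left _ _ <| (tendsto_log_atTop.comp tendsto_natCast_atTop_atTop)
    |>.const_mul_atTop_of_neg (by linarith)

theorem tendsto_invStableExpRate_atTop (hr : 1 < r * (1 - β)) :
    Tendsto (invStableExpRate β t lam r) atTop atTop :=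
  tendsto_atTop_add_const_left _ _ <| (tendsto_log_atTop.comp tendsto_natCast_atTop_atTop)
    |>.const_mul_atTop (by linarith)

theorem invStableExpRate_of_mul_one_sub_eq_one (ht : 0 < t) (hlam : 0 < lam) (hr : 1 < r)
    (hrβ : r * (1 - β) = 1) (n : ℕ) :
    invStableExpRate β t lam r n = log (lam * t ^ (r - 1) / ((r - 1) ^ (r - 1) / r ^ r)) := by
  have hrβ' : r * β = r - 1 := by linarith
  rw [invStableExpRate, hrβ, hrβ', log_div (by positivity) (by positivity),
    log_div (by positivity) (by positivity), log_mul hlam.ne' (by positivity), log_rpow ht,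
    log_rpow (by linarith), log_rpow (by linarith)]
  ring

variable {Ω : Type*} [MeasurableSpace Ω] {P : Measure Ω} [IsProbabilityMeasure P] {X : Ω → ℝ}

theorem lintegral_exp_eq_tsum_invStableExpTerm (hXm : Measurable X) (hX0 : ∀ ω, 0 ≤ X ω)
    (hlam : 0 ≤ lam) (hr : 0 < r)
    (hmom : ∀ q : ℝ, 0 < q →
      ∫⁻ ω, ENNReal.ofReal (X ω ^ q) ∂P = ENNReal.ofReal (invStableMoment β t q)) :
    ∫⁻ ω, ENNReal.ofReal (exp (lam * X ω ^ r)) ∂P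
      = ∑' n, ENNReal.ofReal (invStableExpTerm β t lam r n) := by
  rw [lintegral_ofReal_exp_mul_rpow_eq_tsum P hXm hX0 hlam hr.le]
  congr 1 with n
  rw [invStableExpTerm, ENNReal.ofReal_mul (by positivity)]
  rcases n.eq_zero_or_pos with rfl | hn
  · simp [invStableMoment]
  · rw [hmom _ (by positivity)]

theorem lintegral_exp_lt_top_of_eventually_le (hXm : Measurable X) (hX0 : ∀ ω, 0 ≤ X ω)
    (hβ : 0 < β) (ht : 0 < t) (hlam : 0 < lam) (hr : 0 < r)
    (hmom : ∀ q : ℝ, 0 < q →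
      ∫⁻ ω, ENNReal.ofReal (X ω ^ q) ∂P = ENNReal.ofReal (invStableMoment β t q))
    {ρ : ℝ} (hρ : ρ < 0)
    (h : ∀ᶠ n : ℕ in atTop, invStableExpRate β t lam r n ≤ ρ) :
    ∫⁻ ω, ENNReal.ofReal (exp (lam * X ω ^ r)) ∂P < ⊤ := by
  have hpos := invStableExpTerm_pos hβ.le ht hlam hr.le
  rw [lintegral_exp_eq_tsum_invStableExpTerm hXm hX0 hlam.le hr hmom,
    ← ENNReal.ofReal_tsum_of_nonneg (fun n => (hpos n).le) (summable_of_isLittleO_log_sub_mul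
      hpos (isLittleO_log_invStableExpTerm_sub hβ ht hlam hr) hρ h)]
  exact ENNReal.ofReal_lt_top

theorem lintegral_exp_eq_top_of_eventually_ge (hXm : Measurable X) (hX0 : ∀ ω, 0 ≤ X ω)
    (hβ : 0 < β) (ht : 0 < t) (hlam : 0 < lam) (hr : 0 < r)
    (hmom : ∀ q : ℝ, 0 < q →
      ∫⁻ ω, ENNReal.ofReal (X ω ^ q) ∂P = ENNReal.ofReal (invStableMoment β t q))
    {c : ℝ} (hc : 0 < c)
    (h : ∀ᶠ n : ℕ in atTop, c ≤ invStableExpRate β t lam r n) :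
    ∫⁻ ω, ENNReal.ofReal (exp (lam * X ω ^ r)) ∂P = ⊤ := by
  rw [lintegral_exp_eq_tsum_invStableExpTerm hXm hX0 hlam.le hr hmom]
  exact ENNReal.tsum_ofReal_eq_top_of_eventually_one_le
    (eventually_one_le_of_isLittleO_log_sub_mul (invStableExpTerm_pos hβ.le ht hlam hr.le)
      (isLittleO_log_invStableExpTerm_sub hβ ht hlam hr) hc h)

end InverseStable

/-- Let `β ∈ (0,1)`, `t > 0`, `λ > 0`, and let `X ≥ 0` be a random
variable with the moments of an inverse `β`-stable subordinator at time `t`: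
`E[X^q] = Γ(q+1) t^(qβ) / Γ(qβ+1)` for every `q > 0`.  Then:
(i) for `r ∈ (0, 1/(1-β))`, `E[exp (λ X^r)] < ∞`;
(ii) for `r > 1/(1-β)`, `E[exp (λ X^r)] = ∞`;
(iii) for `r = 1/(1-β)`, `E[exp (λ X^r)] < ∞` if `λ t^(r-1) < (r-1)^(r-1)/r^r` and
`E[exp (λ X^r)] = ∞` if `λ t^(r-1) > (r-1)^(r-1)/r^r`. -/
theorem exp_moment_inverse_stable_threshold
    {Ω : Type*} [MeasurableSpace Ω] (P : Measure Ω) [IsProbabilityMeasure P]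
    (X : Ω → ℝ) (hXm : Measurable X) (hX0 : ∀ ω, 0 ≤ X ω)
    (β t lam : ℝ) (hβ0 : 0 < β) (hβ1 : β < 1) (ht : 0 < t) (hlam : 0 < lam)
    (hmom : ∀ q : ℝ, 0 < q →
      ∫⁻ ω, ENNReal.ofReal (X ω ^ q) ∂P
        = ENNReal.ofReal (Real.Gamma (q + 1) * t ^ (q * β) / Real.Gamma (q * β + 1))) :
    (∀ r : ℝ, 0 < r → r < 1 / (1 - β) →
      ∫⁻ ω, ENNReal.ofReal (Real.exp (lam * X ω ^ r)) ∂P < ⊤) ∧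
    (∀ r : ℝ, 1 / (1 - β) < r →
      ∫⁻ ω, ENNReal.ofReal (Real.exp (lam * X ω ^ r)) ∂P = ⊤) ∧
    (∀ r : ℝ, r = 1 / (1 - β) →
      (lam * t ^ (r - 1) < (r - 1) ^ (r - 1) / r ^ r →
        ∫⁻ ω, ENNReal.ofReal (Real.exp (lam * X ω ^ r)) ∂P < ⊤) ∧
      ((r - 1) ^ (r - 1) / r ^ r < lam * t ^ (r - 1) →
        ∫⁻ ω, ENNReal.ofReal (Real.exp (lam * X ω ^ r)) ∂P = ⊤)) := by
  have hβ' : 0 < 1 - β := by linarith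
  refine ⟨fun r hr hrβ => ?_, fun r hrβ => ?_, fun r hrβ => ?_⟩
  · have hsub : r * (1 - β) < 1 := by rwa [lt_div_iff₀ hβ'] at hrβ
    exact lintegral_exp_lt_top_of_eventually_le hXm hX0 hβ0 ht hlam hr hmom neg_one_lt_zero
      ((tendsto_invStableExpRate_atBot hsub).eventually_le_atBot _)
  · have hsuper : 1 < r * (1 - β) := by rwa [div_lt_iff₀ hβ'] at hrβ
    exact lintegral_exp_eq_top_of_eventually_ge hXm hX0 hβ0 ht hlam (lt_trans (by positivity) hrβ)
      hmom one_pos ((tendsto_invStableExpRate_atTop hsuper).eventually_ge_atTop _)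
  · have hr : 1 < r := hrβ ▸ (one_lt_div hβ').2 (by linarith)
    have hrate := invStableExpRate_of_mul_one_sub_eq_one ht hlam hr (by rw [hrβ]; field_simp)
    refine ⟨fun h => ?_, fun h => ?_⟩
    · exact lintegral_exp_lt_top_of_eventually_le hXm hX0 hβ0 ht hlam (by linarith) hmom
        (log_neg (by positivity) ((div_lt_one (by positivity)).2 h))
        (.of_forall fun n => (hrate n).le)
    · exact lintegral_exp_eq_top_of_eventually_ge hXm hX0 hβ0 ht hlam (by linarith) hmom
        (log_pos ((one_lt_div (by positivity)).2 h)) (.of_forall fun n => (hrate n).ge)
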